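/- arXiv:1801.02061 — 6 statements merged into one kernel-verified Lean document; each statement's English description precedes it below -/
import Mathlib

section
/- For all integers N ≥ 1 and K > N and every demand d : [K] → [N], the generalized independence number and the min-rank of the induced generalized index coding problem coincide: α(d) = κ(d), and this common value equals NK·N_e(d) if N_e(d) ≤ N−1, and equals N²(K−1) if N_e(d) = N. -/
open Matrix

/-- Number of distinct demands `N_e(d)`. -/
def numDistinct {K N : ℕ} (d : Fin K → Fin N) : ℕ := (Finset.univ.image d).card

/-- The set `Z^{(i,m)}(d)` for the GIC problem induced by CFL prefetching (`K > N`):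
receiver `(i,m)` knows the `N` coded packets `∑_a Z(a,(i,j))`, `j ∈ [N]`, and demands
`Z(d(i), m)`. -/
def Zset (F : Type*) [Field F] {N K : ℕ} (d : Fin K → Fin N)
    (i : Fin K) (m : Fin K × Fin N) :
    Set (Matrix (Fin N) (Fin K × Fin N) F) :=
  {Z | (∀ j, ∑ a, Z a (i, j) = 0) ∧ Z (d i) m ≠ 0}

/-- Generalized independence number `α(d)`: the maximum dimension of a subspace
all of whose nonzero elements lie in `⋃_{i,m} Z^{(i,m)}(d)`. -/
noncomputable def alphaCFL (F : Type*) [Field F] {N K : ℕ} (d : Fin K → Fin N) : ℕ :=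
  sSup { k | ∃ U : Submodule F (Matrix (Fin N) (Fin K × Fin N) F),
    (∀ x ∈ U, x ≠ 0 → x ∈ ⋃ i, ⋃ m, Zset F d i m) ∧ Module.finrank F U = k }

/-- The matrix `v_{i,j}` whose `(a,(k,l))` entry is `1` iff `(k,l) = (i,j)`. -/
def vmat (F : Type*) [Field F] {N K : ℕ} (i : Fin K) (j : Fin N) :
    Matrix (Fin N) (Fin K × Fin N) F :=
  fun _ p => if p = (i, j) then 1 else 0

/-- Min-rank `κ(d)`: the minimum over all coefficient choices `c` of the dimension of
the span of the matrices `E_{d(i),m} + ∑_j c_j·v_{i,j}`. -/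
noncomputable def kappaCFL (F : Type*) [Field F] {N K : ℕ} (d : Fin K → Fin N) : ℕ :=
  sInf { k | ∃ c : Fin K × (Fin K × Fin N) → Fin N → F,
    Module.finrank F (Submodule.span F
      (Set.range fun p : Fin K × (Fin K × Fin N) =>
        Matrix.single (d p.1) p.2 (1 : F) + ∑ j, c p j • vmat F p.1 j)) = k }

/-!
For every choice of coefficients `c`, pairing entrywise with the generators
`E_{d(i),m} + ∑ⱼ cⱼ v_{i,j}` recovers `Z(d(i),m)` on every matrix `Z` whose cached packets for
user `i` vanish. Hence an independent subspace embeds into the dual of the span of the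
generators, and `α ≤ κ`. Equality, and the value, come from explicit constructions meeting in
the middle:
* if some file `b₀` is not demanded, the matrices `E_{a,m} - E_{b₀,m}` with `a` demanded span an
  independent subspace of dimension `N_e K N`, and `c = 0` gives generators spanning at most that;
* if every file is demanded and `σ` is a section of `d`, the matrices whose cached packets vanish
  for all users `σ(b)` form an independent subspace of codimension `N²`, while the CFL
  coefficients (subtract `v_{i,l}` from `E_{d(i),(k,l)}` when `d(i) = d(k)`) put every generator
  in the kernel of the surjective decoding map `Y ↦ ((b,l) ↦ ∑_{d(k) = b} Y(b,(k,l)))`.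
-/

open Module Submodule Matrix

theorem csSup_eq_and_csInf_eq_of_forall_le {α : Type*} [ConditionallyCompleteLattice α]
    {A B : Set α} (hAB : ∀ a ∈ A, ∀ b ∈ B, a ≤ b) {a b : α} (ha : a ∈ A) (hb : b ∈ B)
    (hba : b ≤ a) : sSup A = a ∧ sInf B = a := by
  obtain rfl : b = a := le_antisymm hba (hAB a ha b hb)
  exact ⟨IsGreatest.csSup_eq ⟨ha, fun a' ha' => hAB a' ha' b hb⟩,
    IsLeast.csInf_eq ⟨hb, fun b' hb' => hAB b ha b' hb'⟩⟩

theorem finrank_le_finrank_span_of_pairing {R V W ι : Type*} [Field R]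
    [AddCommGroup V] [Module R V] [FiniteDimensional R V] [AddCommGroup W] [Module R W]
    (B : W →ₗ[R] V →ₗ[R] R) (v : ι → V) (U : Submodule R W)
    (hU : ∀ x ∈ U, x ≠ 0 → ∃ i, B x (v i) ≠ 0) :
    finrank R U ≤ finrank R (span R (Set.range v)) := by
  set S := span R (Set.range v)
  have hinj : Function.Injective (S.subtype.dualMap ∘ₗ B ∘ₗ U.subtype) := by
    refine (injective_iff_map_eq_zero _).2 fun x hx => ?_
    by_contra hx0
    obtain ⟨i, hi⟩ := hU x x.2 (by simpa using hx0)
    exact hi (LinearMap.congr_fun hx ⟨v i, subset_span ⟨i, rfl⟩⟩)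
  calc finrank R U ≤ finrank R (Dual R S) := LinearMap.finrank_le_finrank_of_injective hinj
    _ = finrank R S := Subspace.dual_finrank_eq

theorem LinearMap.finrank_ker_of_surjective {R V W : Type*} [Field R]
    [AddCommGroup V] [Module R V] [FiniteDimensional R V] [AddCommGroup W] [Module R W]
    {f : V →ₗ[R] W} (hf : Function.Surjective f) :
    finrank R (ker f) = finrank R V - finrank R W := by
  have h := f.finrank_range_add_finrank_ker
  rw [LinearMap.range_eq_top.2 hf, finrank_top] at h
  omega

namespace Matrix

variable {R m n : Type*} [CommSemiring R] [Fintype m]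

def colSums : Matrix m n R →ₗ[R] n → R where
  toFun Z j := ∑ a, Z a j
  map_add' _ _ := by ext; simp [Finset.sum_add_distrib]
  map_smul' _ _ := by ext; simp [Finset.mul_sum]

theorem colSums_apply (Z : Matrix m n R) (j : n) : colSums Z j = ∑ a, Z a j := rfl

variable [Fintype n]

def entrywisePairing : Matrix m n R →ₗ[R] Matrix m n R →ₗ[R] R :=
  LinearMap.mk₂ R (fun Z A => ∑ a, ∑ b, Z a b * A a b)
    (fun _ _ _ => by simp only [add_apply, add_mul, Finset.sum_add_distrib])
    (fun _ _ _ => by simp only [smul_apply, smul_eq_mul, mul_assoc, Finset.mul_sum])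
    (fun _ _ _ => by simp only [add_apply, mul_add, Finset.sum_add_distrib])
    (fun _ _ _ => by simp only [smul_apply, smul_eq_mul, mul_left_comm, Finset.mul_sum])

theorem entrywisePairing_apply (Z A : Matrix m n R) :
    entrywisePairing Z A = ∑ a, ∑ b, Z a b * A a b := rfl

theorem entrywisePairing_single [DecidableEq m] [DecidableEq n] (Z : Matrix m n R) (a : m)
    (b : n) : entrywisePairing Z (single a b 1) = Z a b := by
  simp [entrywisePairing_apply, single_apply, ite_and]

end Matrix

namespace CFL

variable {F : Type*} [Field F] {N K : ℕ}

local notation "𝕄" => Matrix (Fin N) (Fin K × Fin N) F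

def IsIndependent (d : Fin K → Fin N) (U : Submodule F 𝕄) : Prop :=
  ∀ x ∈ U, x ≠ 0 → x ∈ ⋃ i, ⋃ m, Zset F d i m

variable (F) in
def generator (d : Fin K → Fin N) (c : Fin K × (Fin K × Fin N) → Fin N → F)
    (p : Fin K × (Fin K × Fin N)) : 𝕄 :=
  single (d p.1) p.2 1 + ∑ j, c p j • vmat F p.1 j

theorem entrywisePairing_vmat (Z : 𝕄) (i : Fin K) (j : Fin N) :
    entrywisePairing Z (vmat F i j) = colSums Z (i, j) := by
  simp [entrywisePairing_apply, colSums_apply, vmat]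

theorem entrywisePairing_generator (d : Fin K → Fin N) (c : Fin K × (Fin K × Fin N) → Fin N → F)
    {Z : 𝕄} {i : Fin K} (hZ : ∀ j, ∑ a, Z a (i, j) = 0) (m : Fin K × Fin N) :
    entrywisePairing Z (generator F d c (i, m)) = Z (d i) m := by
  simp [generator, entrywisePairing_single, entrywisePairing_vmat, colSums_apply, hZ]

theorem finrank_le_finrank_span_generator {d : Fin K → Fin N} {U : Submodule F 𝕄}
    (hU : IsIndependent d U) (c : Fin K × (Fin K × Fin N) → Fin N → F) :
    finrank F U ≤ finrank F (span F (Set.range (generator F d c))) := by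
  refine finrank_le_finrank_span_of_pairing entrywisePairing _ U fun x hx hx0 => ?_
  obtain ⟨i, m, hcol, hne⟩ := Set.mem_iUnion₂.1 (hU x hx hx0)
  exact ⟨(i, m), by rwa [entrywisePairing_generator d c hcol]⟩

section Undemanded

variable (d : Fin K → Fin N) (b₀ : Fin N)

variable (F) in
def undemandedVec (q : (Finset.univ.image d) × (Fin K × Fin N)) : 𝕄 :=
  single (q.1 : Fin N) q.2 1 - single b₀ q.2 1

variable {d b₀}

theorem undemandedVec_apply_of_ne (q : (Finset.univ.image d) × (Fin K × Fin N))
    {s : Finset.univ.image d} (hs : (s : Fin N) ≠ b₀) (m : Fin K × Fin N) :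
    undemandedVec F d b₀ q s m = if q = (s, m) then 1 else 0 := by
  rw [undemandedVec, Matrix.sub_apply, single_apply_of_row_ne hs.symm, sub_zero, single_apply]
  simp only [Prod.ext_iff, Subtype.ext_iff]

theorem sum_smul_undemandedVec_apply (hb₀ : b₀ ∉ Finset.univ.image d)
    (t : (Finset.univ.image d) × (Fin K × Fin N) → F) (s : Finset.univ.image d)
    (m : Fin K × Fin N) : (∑ q, t q • undemandedVec F d b₀ q) s m = t (s, m) := by
  have hs : (s : Fin N) ≠ b₀ := fun h => hb₀ (h ▸ s.2)
  simp only [Matrix.sum_apply, Matrix.smul_apply, undemandedVec_apply_of_ne _ hs, smul_eq_mul,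
    mul_ite, mul_one, mul_zero, Finset.sum_ite_eq', Finset.mem_univ, if_true]

theorem colSums_undemandedVec (q : (Finset.univ.image d) × (Fin K × Fin N)) :
    colSums (undemandedVec F d b₀ q) = 0 := by
  ext m
  simp [undemandedVec, colSums_apply, single_apply, Finset.sum_sub_distrib, ite_and]

theorem linearIndependent_undemandedVec (hb₀ : b₀ ∉ Finset.univ.image d) :
    LinearIndependent F (undemandedVec F d b₀) :=
  Fintype.linearIndependent_iff.2 fun t ht q => by
    simpa [ht] using (sum_smul_undemandedVec_apply hb₀ t q.1 q.2).symm

theorem isIndependent_span_undemandedVec (hb₀ : b₀ ∉ Finset.univ.image d) :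
    IsIndependent d (span F (Set.range (undemandedVec F d b₀))) := by
  intro x hx hx0
  obtain ⟨t, rfl⟩ := (mem_span_range_iff_exists_fun F).1 hx
  obtain ⟨q, hq⟩ : ∃ q, t q ≠ 0 := by
    by_contra! h
    exact hx0 (by simp [h])
  obtain ⟨i, -, hi⟩ := Finset.mem_image.1 q.1.2
  have hcol : ∑ q, t q • undemandedVec F d b₀ q ∈ LinearMap.ker (colSums (R := F)) :=
    sum_mem fun q _ => smul_mem _ _ (colSums_undemandedVec q)
  refine Set.mem_iUnion₂.2 ⟨i, q.2, fun j => ?_, ?_⟩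
  · exact congr_fun hcol (i, j)
  · rwa [hi, sum_smul_undemandedVec_apply hb₀]

theorem finrank_span_undemandedVec (hb₀ : b₀ ∉ Finset.univ.image d) :
    finrank F (span F (Set.range (undemandedVec F d b₀))) = numDistinct d * (K * N) := by
  rw [finrank_span_eq_card (linearIndependent_undemandedVec hb₀), Fintype.card_prod,
    Fintype.card_coe]
  simp [numDistinct]

end Undemanded

theorem finrank_span_generator_zero_le (d : Fin K → Fin N) :
    finrank F (span F (Set.range (generator F d 0))) ≤ numDistinct d * (K * N) := by
  classical
  have hrange : Set.range (generator F d 0) =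
      ((Finset.univ.image d ×ˢ Finset.univ).image fun q => single q.1 q.2 1 : Finset 𝕄) := by
    ext x
    simp [generator]
  calc _ ≤ _ := hrange ▸ finrank_span_finset_le_card _
    _ ≤ (Finset.univ.image d ×ˢ (Finset.univ : Finset (Fin K × Fin N))).card :=
        Finset.card_image_le
    _ = numDistinct d * (K * N) := by simp [numDistinct]

section AllDemanded

variable {d : Fin K → Fin N} {σ : Fin N → Fin K}

variable (F) in
def liftAlong (σ : Fin N → Fin K) (w : Fin N × Fin N → F) : 𝕄 :=
  fun a km => if km.1 = σ a then w (a, km.2) else 0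

variable (F) in
def sectionColSums (σ : Fin N → Fin K) : 𝕄 →ₗ[F] Fin N × Fin N → F :=
  LinearMap.funLeft F F (fun q => (σ q.1, q.2)) ∘ₗ colSums

theorem sectionColSums_apply (Z : 𝕄) (q : Fin N × Fin N) :
    sectionColSums F σ Z q = ∑ a, Z a (σ q.1, q.2) := rfl

theorem sectionColSums_surjective (hσ : Function.Injective σ) :
    Function.Surjective (sectionColSums F σ) := fun w =>
  ⟨liftAlong F σ w, by ext q; simp [sectionColSums_apply, liftAlong, hσ.eq_iff]⟩

theorem isIndependent_ker_sectionColSums (hσ : Function.LeftInverse d σ) :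
    IsIndependent d (LinearMap.ker (sectionColSums F σ)) := by
  intro x hx hx0
  obtain ⟨a, m, hxam⟩ : ∃ a m, x a m ≠ 0 := by
    by_contra! h
    exact hx0 (Matrix.ext h)
  refine Set.mem_iUnion₂.2 ⟨σ a, m, fun j => congr_fun hx (a, j), ?_⟩
  rwa [hσ a]

theorem finrank_ker_eq_of_surjective {f : 𝕄 →ₗ[F] Fin N × Fin N → F}
    (hf : Function.Surjective f) : finrank F (LinearMap.ker f) = N * (K * N) - N * N := by
  simp [LinearMap.finrank_ker_of_surjective hf, finrank_matrix]

variable (F d) in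
def decode : 𝕄 →ₗ[F] Fin N × Fin N → F where
  toFun Y q := ∑ k with d k = q.1, Y q.1 (k, q.2)
  map_add' _ _ := by ext; simp [Finset.sum_add_distrib]
  map_smul' _ _ := by ext; simp [Finset.mul_sum]

theorem decode_apply (Y : 𝕄) (q : Fin N × Fin N) :
    decode F d Y q = ∑ k, if d k = q.1 then Y q.1 (k, q.2) else 0 := by
  rw [← Finset.sum_filter]
  rfl

theorem decode_surjective (hσ : Function.LeftInverse d σ) :
    Function.Surjective (decode F d) := fun w =>
  ⟨liftAlong F σ w, by ext q; simp [decode, liftAlong, Finset.sum_ite_eq', hσ q.1]⟩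

variable (d) in
def cflCoeff : Fin K × (Fin K × Fin N) → Fin N → F :=
  fun p j => if d p.1 = d p.2.1 ∧ j = p.2.2 then -1 else 0

theorem decode_single (a : Fin N) (k : Fin K) (l : Fin N) :
    decode F d (single a (k, l) 1) = if d k = a then Pi.single (a, l) 1 else 0 := by
  ext q
  rw [decode_apply, Finset.sum_eq_single k (fun k' _ hk' => by simp [Ne.symm hk']) (by simp)]
  split_ifs with h <;> simp [single_apply, Pi.single_apply, Prod.ext_iff] <;> grind

theorem decode_vmat (i : Fin K) (l : Fin N) :
    decode F d (vmat F i l) = Pi.single (d i, l) 1 := by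
  ext q
  rw [decode_apply, Finset.sum_eq_single i (fun k' _ hk' => by simp [vmat, hk'])
    (by simp)]
  simp only [vmat, Pi.single_apply, Prod.ext_iff]
  grind

theorem decode_generator_cflCoeff (p : Fin K × (Fin K × Fin N)) :
    decode F d (generator F d (cflCoeff d) p) = 0 := by
  obtain ⟨i, k, l⟩ := p
  by_cases h : d i = d k
  · simp [generator, cflCoeff, decode_single, decode_vmat, h, ite_smul, Finset.sum_ite_eq']
  · simp [generator, cflCoeff, decode_single, h, Ne.symm h]

theorem finrank_span_generator_cflCoeff_le (hσ : Function.LeftInverse d σ) :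
    finrank F (span F (Set.range (generator F d (cflCoeff d)))) ≤ N * (K * N) - N * N := by
  have hle : span F (Set.range (generator F d (cflCoeff d))) ≤ LinearMap.ker (decode F d) :=
    span_le.2 <| Set.range_subset_iff.2 decode_generator_cflCoeff
  calc _ ≤ _ := Submodule.finrank_mono hle
    _ = _ := finrank_ker_eq_of_surjective (decode_surjective hσ)

end AllDemanded

theorem alphaCFL_eq_and_kappaCFL_eq {d : Fin K → Fin N} {n : ℕ} {U : Submodule F 𝕄}
    (hU : IsIndependent d U) (hUn : finrank F U = n) (c : Fin K × (Fin K × Fin N) → Fin N → F)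
    (hc : finrank F (span F (Set.range (generator F d c))) ≤ n) :
    alphaCFL F d = n ∧ kappaCFL F d = n := by
  refine csSup_eq_and_csInf_eq_of_forall_le ?_ ⟨U, hU, hUn⟩ ⟨c, rfl⟩ hc
  rintro _ ⟨U', hU', rfl⟩ _ ⟨c', rfl⟩
  exact finrank_le_finrank_span_generator hU' c'

end CFL

open CFL

theorem alpha_eq_kappa_CFL_KgtN_general (F : Type*) [Field F]
    (N K : ℕ) (d : Fin K → Fin N) :
    alphaCFL F d = kappaCFL F d ∧
    (numDistinct d ≤ N - 1 → alphaCFL F d = N * K * numDistinct d) ∧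
    (numDistinct d = N → alphaCFL F d = N ^ 2 * (K - 1)) := by
  by_cases hd : Function.Surjective d
  · obtain ⟨σ, hσ⟩ := hd.hasRightInverse
    have hN : numDistinct d = N := by simp [numDistinct, Finset.image_univ_of_surjective hd]
    obtain ⟨hα, hκ⟩ := alphaCFL_eq_and_kappaCFL_eq (isIndependent_ker_sectionColSums hσ)
      (finrank_ker_eq_of_surjective (sectionColSums_surjective (F := F) hσ.injective))
      (cflCoeff d) (finrank_span_generator_cflCoeff_le hσ)
    refine ⟨hα.trans hκ.symm, fun h => ?_, fun _ => ?_⟩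
    · obtain rfl : N = 0 := by omega
      simp [hα]
    · rw [hα, Nat.mul_sub_one, sq, mul_comm K, mul_assoc]
  · obtain ⟨b₀, hb₀⟩ : ∃ b₀, b₀ ∉ Finset.univ.image d := by
      simpa [Function.Surjective] using hd
    have hN : numDistinct d < N :=
      (Finset.card_lt_univ_of_notMem hb₀).trans_eq (Fintype.card_fin N)
    obtain ⟨hα, hκ⟩ := alphaCFL_eq_and_kappaCFL_eq (isIndependent_span_undemandedVec (F := F) hb₀)
      (finrank_span_undemandedVec hb₀) 0 (finrank_span_generator_zero_le d)
    exact ⟨hα.trans hκ.symm, fun _ => by rw [hα]; ring, fun h => absurd h hN.ne⟩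

theorem alpha_eq_kappa_CFL_KgtN (F : Type*) [Field F] [Fintype F]
    (N K : ℕ) (hN : 1 ≤ N) (hK : N < K) (d : Fin K → Fin N) :
    alphaCFL F d = kappaCFL F d ∧
    (numDistinct d ≤ N - 1 → alphaCFL F d = N * K * numDistinct d) ∧
    (numDistinct d = N → alphaCFL F d = N ^ 2 * (K - 1)) :=
  alpha_eq_kappa_CFL_KgtN_general F N K d
end

section
/- For integers N ≥ 1 and K > N, if the demand d : [K] → [N] is surjective (i.e., N_e(d) = N), then the generalized independence number satisfies α(d) ≥ N²(K−1). -/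
open Matrix

/-!
Choose a right inverse `σ` of the demand, so that user `σ a` requests file `a`. The messages `Z`
whose `N²` packets `Y_{σ a, j}(Z)` all vanish form the kernel of a linear map to `F^{N×N}`, hence a
subspace of dimension at least `N·KN − N² = N²(K−1)`. A nonzero `Z` in it has a nonzero entry
`Z(a, m)`, and then `Z ∈ Z^{(σ a, m)}(d)`.
-/

theorem LinearMap.finrank_sub_finrank_le_finrank_ker {K V W : Type*} [DivisionRing K]
    [AddCommGroup V] [Module K V] [AddCommGroup W] [Module K W]
    [FiniteDimensional K V] [FiniteDimensional K W] (f : V →ₗ[K] W) :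
    Module.finrank K V - Module.finrank K W ≤ Module.finrank K (LinearMap.ker f) := by
  have := f.finrank_range_add_finrank_ker
  have := (LinearMap.range f).finrank_le
  omega

section

variable {F : Type*} [Field F] {N K : ℕ}

theorem le_alphaCFL {d : Fin K → Fin N} (U : Submodule F (Matrix (Fin N) (Fin K × Fin N) F))
    (hU : ∀ x ∈ U, x ≠ 0 → x ∈ ⋃ i, ⋃ m, Zset F d i m) :
    Module.finrank F U ≤ alphaCFL F d :=
  le_csSup ⟨_, by rintro _ ⟨V, -, rfl⟩; exact V.finrank_le⟩ ⟨U, hU, rfl⟩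

variable (F) in
def cachedPackets (σ : Fin N → Fin K) :
    Matrix (Fin N) (Fin K × Fin N) F →ₗ[F] (Fin N × Fin N → F) :=
  LinearMap.pi fun p => ∑ b, (LinearMap.proj (σ p.1, p.2)) ∘ₗ (LinearMap.proj b)

theorem cachedPackets_apply (σ : Fin N → Fin K) (Z : Matrix (Fin N) (Fin K × Fin N) F)
    (a j : Fin N) : cachedPackets F σ Z (a, j) = ∑ b, Z b (σ a, j) := by
  simp only [cachedPackets, LinearMap.pi_apply, LinearMap.sum_apply]
  rfl

theorem mem_iUnion_Zset_of_mem_ker {d : Fin K → Fin N} {σ : Fin N → Fin K}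
    (hσ : Function.RightInverse σ d) {Z : Matrix (Fin N) (Fin K × Fin N) F}
    (hZ : Z ∈ LinearMap.ker (cachedPackets F σ)) (hZ0 : Z ≠ 0) :
    Z ∈ ⋃ i, ⋃ m, Zset F d i m := by
  obtain ⟨a, m, ham⟩ : ∃ a m, Z a m ≠ 0 := by
    by_contra! h
    exact hZ0 (Matrix.ext h)
  refine Set.mem_iUnion₂.mpr ⟨σ a, m, fun j => ?_, by rwa [hσ a]⟩
  rw [← cachedPackets_apply, LinearMap.mem_ker.mp hZ, Pi.zero_apply]

end

theorem alpha_ge_of_surjective_general (F : Type*) [Field F]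
    (N K : ℕ) (d : Fin K → Fin N)
    (hd : Function.Surjective d) :
    N ^ 2 * (K - 1) ≤ alphaCFL F d := by
  obtain ⟨σ, hσ⟩ := hd.hasRightInverse
  calc N ^ 2 * (K - 1)
      = Module.finrank F (Matrix (Fin N) (Fin K × Fin N) F)
          - Module.finrank F (Fin N × Fin N → F) := by
        simp only [Module.finrank_matrix, Module.finrank_fintype_fun_eq_card, Fintype.card_prod,
          Fintype.card_fin, Module.finrank_self]
        rw [Nat.mul_sub_one]
        ring_nf
    _ ≤ Module.finrank F (LinearMap.ker (cachedPackets F σ)) :=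
        (cachedPackets F σ).finrank_sub_finrank_le_finrank_ker
    _ ≤ alphaCFL F d := le_alphaCFL _ fun _ hZ hZ0 => mem_iUnion_Zset_of_mem_ker hσ hZ hZ0

theorem alpha_ge_of_surjective (F : Type*) [Field F] [Fintype F]
    (N K : ℕ) (hN : 1 ≤ N) (hK : N < K) (d : Fin K → Fin N)
    (hd : Function.Surjective d) :
    N ^ 2 * (K - 1) ≤ alphaCFL F d :=
  alpha_ge_of_surjective_general F N K d hd
end

section
/- For integers N ≥ 1 and K > N, if the demand d : [K] → [N] satisfies N_e(d) ≤ N−1, then the generalized independence number satisfies α(d) ≥ NK·N_e(d). -/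
open Matrix

/-!
Let `S` be the set of demanded files and `t` a file nobody demands. Fill the rows of `S`
freely and let row `t` be minus their sum: every column of such a matrix sums to zero,
so it is invisible to the cached coded packets, and a nonzero one has a nonzero entry in
some demanded row `d i`, hence lies in `Z^{(i,m)}(d)`. These matrices form a subspace of
dimension `|S| · NK`.
-/

section ZeroSumExtension

variable {R ι κ : Type*} [Ring R] [DecidableEq ι]

def zeroSumExtension (S : Finset ι) (t : ι) : Matrix S κ R →ₗ[R] Matrix ι κ R where
  toFun f := Matrix.of fun a m ↦
    if h : a ∈ S then f ⟨a, h⟩ m else if a = t then -∑ b, f b m else 0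
  map_add' f g := by
    ext a
    simp only [Matrix.of_apply, Matrix.add_apply]
    split_ifs <;> simp [Finset.sum_add_distrib, add_comm]
  map_smul' c f := by
    ext a
    simp only [Matrix.of_apply, Matrix.smul_apply, RingHom.id_apply]
    split_ifs <;> simp [Finset.mul_sum]

variable {S : Finset ι} {t : ι}

theorem zeroSumExtension_apply_of_mem (f : Matrix S κ R) {a : ι} (h : a ∈ S) (m : κ) :
    zeroSumExtension S t f a m = f ⟨a, h⟩ m :=
  dif_pos h

theorem zeroSumExtension_injective :
    Function.Injective (zeroSumExtension (R := R) (κ := κ) S t) := fun f g hfg ↦ by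
  ext ⟨a, h⟩ m
  simpa [zeroSumExtension_apply_of_mem _ h] using congrFun₂ hfg a m

theorem sum_zeroSumExtension_apply [Fintype ι] (ht : t ∉ S) (f : Matrix S κ R) (m : κ) :
    ∑ a, zeroSumExtension S t f a m = 0 := by
  have h_off : ∀ a ∈ Sᶜ, a ≠ t → zeroSumExtension S t f a m = 0 := fun a ha hat ↦ by
    simp [zeroSumExtension, Finset.mem_compl.mp ha, hat]
  rw [← Finset.sum_add_sum_compl S, ← Finset.sum_coe_sort S,
    Finset.sum_eq_single_of_mem t (Finset.mem_compl.mpr ht) h_off]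
  simp [zeroSumExtension, ht]

theorem finrank_range_zeroSumExtension {𝕜 : Type*} [Field 𝕜] [Fintype κ] :
    Module.finrank 𝕜 (LinearMap.range (zeroSumExtension (R := 𝕜) (κ := κ) S t)) =
      S.card * Fintype.card κ := by
  rw [LinearMap.finrank_range_of_inj zeroSumExtension_injective, Module.finrank_matrix]
  simp

end ZeroSumExtension

section CFL

variable {F : Type*} [Field F] {N K : ℕ} {d : Fin K → Fin N}

theorem finrank_le_alphaCFL {U : Submodule F (Matrix (Fin N) (Fin K × Fin N) F)}
    (hU : (U : Set _) \ {0} ⊆ ⋃ i, ⋃ m, Zset F d i m) :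
    Module.finrank F U ≤ alphaCFL F d :=
  le_csSup ⟨_, by rintro k ⟨V, -, rfl⟩; exact V.finrank_le⟩
    ⟨U, fun _ hx hx0 ↦ hU ⟨hx, hx0⟩, rfl⟩

theorem range_zeroSumExtension_diff_zero_subset_Zset {t : Fin N}
    (ht : t ∉ Finset.univ.image d) :
    (LinearMap.range (zeroSumExtension (R := F) (κ := Fin K × Fin N) (Finset.univ.image d) t) :
      Set (Matrix (Fin N) (Fin K × Fin N) F)) \ {0} ⊆
      ⋃ i, ⋃ m, Zset F d i m := by
  rintro _ ⟨⟨f, rfl⟩, hf⟩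
  obtain ⟨⟨a, ha⟩, m, hm⟩ : ∃ b m, f b m ≠ 0 := by
    by_contra! h
    exact hf (by rw [show f = 0 from Matrix.ext h, map_zero]; rfl)
  obtain ⟨i, -, rfl⟩ := Finset.mem_image.mp ha
  refine Set.mem_iUnion₂.mpr ⟨i, m, fun j ↦ sum_zeroSumExtension_apply ht f (i, j), ?_⟩
  rwa [zeroSumExtension_apply_of_mem f ha]

end CFL

theorem alpha_ge_of_not_all_distinct_general (F : Type*) [Field F]
    (N K : ℕ) (hN : 1 ≤ N) (d : Fin K → Fin N)
    (hd : numDistinct d ≤ N - 1) :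
    N * K * numDistinct d ≤ alphaCFL F d := by
  obtain ⟨t, -, ht⟩ : ∃ t ∈ Finset.univ, t ∉ Finset.univ.image d :=
    Finset.exists_mem_notMem_of_card_lt_card <| by
      rw [Finset.card_univ, Fintype.card_fin]; unfold numDistinct at hd; omega
  calc N * K * numDistinct d
      = Module.finrank F (LinearMap.range (zeroSumExtension (Finset.univ.image d) t)) := by
        rw [finrank_range_zeroSumExtension, numDistinct, Fintype.card_prod]
        simp only [Fintype.card_fin]
        ring
    _ ≤ alphaCFL F d := finrank_le_alphaCFL (range_zeroSumExtension_diff_zero_subset_Zset ht)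

theorem alpha_ge_of_not_all_distinct (F : Type*) [Field F] [Fintype F]
    (N K : ℕ) (hN : 1 ≤ N) (hK : N < K) (d : Fin K → Fin N)
    (hd : numDistinct d ≤ N - 1) :
    N * K * numDistinct d ≤ alphaCFL F d :=
  alpha_ge_of_not_all_distinct_general F N K hN d hd
end

section
/- For all integers N ≥ 1, K > N and every demand d : [K] → [N], the min-rank satisfies κ(d) ≤ NK·N_e(d) if N_e(d) ≤ N−1, and κ(d) ≤ N²(K−1) if N_e(d) = N. Equivalently, there is a choice of side-information coefficient vectors for the receivers for which the span of the matrices E_{d(i),m} + Σ_j c_j·v_{i,j} has dimension at most the stated bound. -/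
open Matrix

/-! With all side-information coefficients zero, the span lies in the span of the unit matrices
`E_{a,m}` with `a` a demanded file, which has dimension `N_e(d)·KN`. When every file is demanded,
give receiver `(i,(k,j))` the coefficient `-1` on `v_{i,j}` exactly when `d k = d i`. Every
resulting matrix is then killed by `Z ↦ ((a,l) ↦ ∑_{d k = a} Z(a,(k,l)))`, a map onto `F^{N×N}`
because `d` is surjective, so the span has dimension at most `N·KN − N² = N²(K−1)`. -/

section demandSum

variable {R α ι β : Type*} [CommSemiring R] [Fintype ι] [DecidableEq α] (d : ι → α)

def demandSum : Matrix α (ι × β) R →ₗ[R] α × β → R where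
  toFun Z q := ∑ k with d k = q.1, Z q.1 (k, q.2)
  map_add' Z W := by ext q; simp [Finset.sum_add_distrib]
  map_smul' r Z := by ext q; simp [Finset.mul_sum]

theorem demandSum_apply (Z : Matrix α (ι × β) R) (q : α × β) :
    demandSum d Z q = ∑ k with d k = q.1, Z q.1 (k, q.2) := rfl

theorem demandSum_single [DecidableEq ι] [DecidableEq β] (a : α) (k : ι) (j : β) (q : α × β) :
    demandSum d (single a (k, j) (1 : R)) q =
      if a = q.1 ∧ d k = q.1 ∧ j = q.2 then 1 else 0 := by
  simp only [demandSum_apply, Finset.sum_filter, Matrix.single_apply, Prod.ext_iff]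
  rw [Finset.sum_eq_single k (by grind) (by simp)]
  grind

theorem demandSum_surjective (hd : Function.Surjective d) :
    Function.Surjective (demandSum (R := R) (β := β) d) := by
  classical
  intro g
  refine ⟨Matrix.of fun a p => if p.1 = Function.surjInv hd a then g (a, p.2) else 0, ?_⟩
  ext q
  rw [demandSum_apply, Finset.sum_eq_single (Function.surjInv hd q.1)]
  · simp
  · intro b _ hb; simp [hb]
  · simp [Function.surjInv_eq]

end demandSum

theorem finrank_ker_demandSum {F α ι β : Type*} [Field F] [Fintype α] [Fintype ι] [Fintype β]
    [DecidableEq α] {d : ι → α} (hd : Function.Surjective d) :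
    Module.finrank F (LinearMap.ker (demandSum (R := F) (β := β) d)) =
      Fintype.card α * (Fintype.card ι * Fintype.card β) - Fintype.card α * Fintype.card β := by
  have h := LinearMap.finrank_range_add_finrank_ker (demandSum (R := F) (β := β) d)
  rw [LinearMap.range_eq_top_of_surjective _ (demandSum_surjective d hd), finrank_top] at h
  simp only [Module.finrank_matrix, Module.finrank_pi, Module.finrank_self,
    Fintype.card_prod] at h ⊢
  omega

section CFL

variable {F : Type*} [Field F] {N K : ℕ} (d : Fin K → Fin N)

variable (F) in
def kappaGenerator (c : Fin K × (Fin K × Fin N) → Fin N → F) (p : Fin K × (Fin K × Fin N)) :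
    Matrix (Fin N) (Fin K × Fin N) F :=
  single (d p.1) p.2 1 + ∑ j, c p j • vmat F p.1 j

theorem kappaCFL_le_finrank_span (c : Fin K × (Fin K × Fin N) → Fin N → F) :
    kappaCFL F d ≤ Module.finrank F (Submodule.span F (Set.range (kappaGenerator F d c))) :=
  Nat.sInf_le ⟨c, rfl⟩

theorem kappaCFL_le_mul_numDistinct : kappaCFL F d ≤ N * K * numDistinct d := by
  classical
  let unitMatrix (q : (Finset.univ.image d) × (Fin K × Fin N)) :
      Matrix (Fin N) (Fin K × Fin N) F := single q.1 q.2 1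
  have hsub : Set.range (kappaGenerator F d 0) ⊆ Set.range unitMatrix := by
    rintro _ ⟨p, rfl⟩
    exact ⟨(⟨d p.1, Finset.mem_image_of_mem d (Finset.mem_univ _)⟩, p.2),
      by simp [kappaGenerator, unitMatrix]⟩
  calc kappaCFL F d
      ≤ Module.finrank F (Submodule.span F (Set.range (kappaGenerator F d 0))) :=
        kappaCFL_le_finrank_span d 0
    _ ≤ Module.finrank F (Submodule.span F (Set.range unitMatrix)) :=
        Submodule.finrank_mono (Submodule.span_mono hsub)
    _ ≤ Fintype.card ((Finset.univ.image d) × (Fin K × Fin N)) := finrank_range_le_card _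
    _ = N * K * numDistinct d := by
        simp only [Fintype.card_prod, Fintype.card_coe, Fintype.card_fin, numDistinct]; ring

theorem sum_smul_vmat_apply (i : Fin K) (c : Fin N → F) (a : Fin N) (p : Fin K × Fin N) :
    (∑ j, c j • vmat F i j) a p = if p.1 = i then c p.2 else 0 := by
  simp [Matrix.sum_apply, vmat, Prod.ext_iff, ite_and]

theorem demandSum_sum_smul_vmat (i : Fin K) (c : Fin N → F) (q : Fin N × Fin N) :
    demandSum d (∑ j, c j • vmat F i j) q = if d i = q.1 then c q.2 else 0 := by
  simp [demandSum_apply, sum_smul_vmat_apply]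

def alignedCoeffs (p : Fin K × (Fin K × Fin N)) (j : Fin N) : F :=
  if d p.2.1 = d p.1 ∧ j = p.2.2 then -1 else 0

theorem demandSum_kappaGenerator_alignedCoeffs (p : Fin K × (Fin K × Fin N)) :
    demandSum d (kappaGenerator F d (alignedCoeffs d) p) = 0 := by
  ext q
  rw [kappaGenerator, map_add, Pi.add_apply, demandSum_sum_smul_vmat, demandSum_single,
    Pi.zero_apply]
  simp only [alignedCoeffs]
  grind

theorem kappaCFL_le_of_surjective (hd : Function.Surjective d) :
    kappaCFL F d ≤ N ^ 2 * (K - 1) := by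
  have hker : Submodule.span F (Set.range (kappaGenerator F d (alignedCoeffs d))) ≤
      LinearMap.ker (demandSum d) :=
    Submodule.span_le.2 <| Set.range_subset_iff.2 (demandSum_kappaGenerator_alignedCoeffs d)
  calc kappaCFL F d
      ≤ _ := kappaCFL_le_finrank_span d (alignedCoeffs d)
    _ ≤ _ := Submodule.finrank_mono hker
    _ = N * (K * N) - N * N := by simpa using finrank_ker_demandSum (F := F) (β := Fin N) hd
    _ = N ^ 2 * (K - 1) := by rw [Nat.mul_sub]; ring_nf

theorem surjective_of_numDistinct_eq (h : numDistinct d = N) : Function.Surjective d := by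
  have himage : Finset.univ.image d = Finset.univ :=
    Finset.eq_univ_of_card _ (by rw [← numDistinct, h, Fintype.card_fin])
  intro a
  obtain ⟨k, -, hk⟩ := Finset.mem_image.1 (himage ▸ Finset.mem_univ a)
  exact ⟨k, hk⟩

end CFL

theorem kappa_le_CFL_KgtN_general (F : Type*) [Field F]
    (N K : ℕ) (d : Fin K → Fin N) :
    (numDistinct d ≤ N - 1 → kappaCFL F d ≤ N * K * numDistinct d) ∧
    (numDistinct d = N → kappaCFL F d ≤ N ^ 2 * (K - 1)) :=
  ⟨fun _ => kappaCFL_le_mul_numDistinct d,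
    fun h => kappaCFL_le_of_surjective d (surjective_of_numDistinct_eq d h)⟩

theorem kappa_le_CFL_KgtN (F : Type*) [Field F] [Fintype F]
    (N K : ℕ) (hN : 1 ≤ N) (hK : N < K) (d : Fin K → Fin N) :
    (numDistinct d ≤ N - 1 → kappaCFL F d ≤ N * K * numDistinct d) ∧
    (numDistinct d = N → kappaCFL F d ≤ N ^ 2 * (K - 1)) :=
  kappa_le_CFL_KgtN_general F N K d
end

section
/- Let N ≥ 1, K > N, and let d : [K] → [N] be a demand with N_e(d) ≤ N−1; let D ⊆ [N] be the range of d and fix u₀ ∈ [N]\D. Let S be the set of matrices M ∈ M_{N,K} such that every column of M sums to zero and every row of M with index in [N]\(D ∪ {u₀}) is zero. Then every nonzero element of S lies in ∪_{i,m} Z^{(i,m)}(d); in particular, for each nonzero M ∈ S there exist i ∈ [K] and a column index m with M(d(i),m) ≠ 0. -/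
open Matrix

section ColumnSums

variable {ι M : Type*} [AddCommMonoid M] [Fintype ι] {v : ι → M}

theorem exists_ne_and_ne_zero_of_sum_eq_zero (hv : ∑ b, v b = 0) {a : ι} (ha : v a ≠ 0) :
    ∃ b, b ≠ a ∧ v b ≠ 0 := by
  by_contra! h
  exact ha (hv ▸ (Finset.sum_eq_single a (fun b _ hb => h b hb) (by simp)).symm)

theorem exists_mem_ne_zero_of_sum_eq_zero {s : Set ι} {u : ι} (hv : ∑ b, v b = 0)
    (hsupp : ∀ b, b ∉ s → b ≠ u → v b = 0) {a : ι} (ha : v a ≠ 0) :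
    ∃ b ∈ s, v b ≠ 0 := by
  have mem_of_ne_zero : ∀ b, v b ≠ 0 → b ≠ u → b ∈ s := fun b hb hbu =>
    by_contra fun hbs => hb (hsupp b hbs hbu)
  by_cases hau : a = u
  · obtain ⟨b, hba, hb⟩ := exists_ne_and_ne_zero_of_sum_eq_zero hv ha
    exact ⟨b, mem_of_ne_zero b hb (hau ▸ hba), hb⟩
  · exact ⟨a, mem_of_ne_zero a ha hau, ha⟩

end ColumnSums

theorem span_subset_Zunion_general (F : Type*) [Field F]
    (N K : ℕ) (d : Fin K → Fin N)
    (u₀ : Fin N) :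
    ∀ M : Matrix (Fin N) (Fin K × Fin N) F,
      (∀ m, ∑ a, M a m = 0) →
      (∀ a, a ∉ Set.range d → a ≠ u₀ → ∀ m, M a m = 0) →
      M ≠ 0 →
      (M ∈ ⋃ i, ⋃ m, Zset F d i m) ∧ ∃ i m, M (d i) m ≠ 0 := by
  intro M hcol hrow hM
  obtain ⟨a, m, ham⟩ : ∃ a m, M a m ≠ 0 := by
    by_contra! h
    exact hM (Matrix.ext h)
  obtain ⟨_, ⟨i, rfl⟩, him⟩ :=
    exists_mem_ne_zero_of_sum_eq_zero (hcol m) (fun b hb hbu => hrow b hb hbu m) ham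
  exact ⟨Set.mem_iUnion₂.2 ⟨i, m, fun j => hcol (i, j), him⟩, i, m, him⟩

theorem span_subset_Zunion (F : Type*) [Field F] [Fintype F]
    (N K : ℕ) (hN : 1 ≤ N) (hK : N < K) (d : Fin K → Fin N)
    (hd : numDistinct d ≤ N - 1)
    (u₀ : Fin N) (hu : u₀ ∉ Set.range d) :
    ∀ M : Matrix (Fin N) (Fin K × Fin N) F,
      (∀ m, ∑ a, M a m = 0) →
      (∀ a, a ∉ Set.range d → a ≠ u₀ → ∀ m, M a m = 0) →
      M ≠ 0 →
      (M ∈ ⋃ i, ⋃ m, Zset F d i m) ∧ ∃ i m, M (d i) m ≠ 0 :=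
  span_subset_Zunion_general F N K d u₀
end

section
/- For all integers N ≥ 1, K > N, every demand d : [K] → [N], and every integer δ ≥ 0, the smallest length ℓ for which there exists a linear δ-error-correcting delivery code of length ℓ for I(M_CFL, d) equals N_q[κ*, 2δ+1], where κ* = NK·N_e(d) if N_e(d) ≤ N−1 and κ* = N²(K−1) if N_e(d) = N. -/
open Matrix

/-- `E` is a linear `δ`-error-correcting delivery code of length `ℓ` for the GIC
problem `I(M_CFL, d)` induced by CFL prefetching with `N` files and `K > N` users:
receiver `(i,m)` knows the `N` coded packets `∑_a X(a,(i,j))`, `j ∈ [N]`, and, from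
any received word within Hamming distance `δ` of `E(X)`, must recover `X(d(i), m)`. -/
def IsECDeliveryCode (F : Type*) [Field F] [DecidableEq F] {N K : ℕ}
    (d : Fin K → Fin N) (δ ℓ : ℕ)
    (E : Matrix (Fin N) (Fin K × Fin N) F →ₗ[F] (Fin ℓ → F)) : Prop :=
  ∀ (i : Fin K) (m : Fin K × Fin N), ∃ Dec : (Fin ℓ → F) → (Fin N → F) → F,
    ∀ X : Matrix (Fin N) (Fin K × Fin N) F, ∀ y : Fin ℓ → F,
      hammingDist y (E X) ≤ δ →
        Dec y (fun j => ∑ a, X a (i, j)) = X (d i) m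

/-- The smallest length of a linear `δ`-error-correcting delivery code for
`I(M_CFL, d)`. -/
noncomputable def optLen (F : Type*) [Field F] [DecidableEq F] {N K : ℕ}
    (d : Fin K → Fin N) (δ : ℕ) : ℕ :=
  sInf { ℓ | ∃ E : Matrix (Fin N) (Fin K × Fin N) F →ₗ[F] (Fin ℓ → F),
    IsECDeliveryCode F d δ ℓ E }

/-- `N_q[k, d']`: the smallest length `n` of a `k`-dimensional linear code over `F`
whose distinct codewords are at Hamming distance at least `d'` from each other. -/
noncomputable def shortestCodeLen (F : Type*) [Field F] [DecidableEq F] (k d' : ℕ) : ℕ :=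
  sInf { n | ∃ C : Submodule F (Fin n → F), Module.finrank F C = k ∧
    ∀ x ∈ C, ∀ y ∈ C, x ≠ y → d' ≤ hammingDist x y }

/-!
A linear map `E` is a `δ`-error-correcting delivery code exactly when it gives Hamming weight
`> 2δ` to every message difference `Z` that some user `i` cannot detect through its cache
(`∑ a, Z a (i, j) = 0` for all `j`) although `Z` is nonzero on the requested row `d i`. Call
this set `B`. If `U \ {0} ⊆ B` for a `κ`-dimensional subspace `U`, then `E` maps `U`
injectively onto a `κ`-dimensional code of minimum distance `2δ + 1`; if `B` avoids the kernel
of a linear map `p` into a `κ`-dimensional space, then `p` followed by an isomorphism onto such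
a code is a delivery code. So the optimal length is `N_q[κ, 2δ + 1]` once `p` and `U` are found.

When a file `b` is not requested, `p` restricts to the `N_e(d)` requested rows, and `U`
consists of the matrices supported on those rows and row `b` with all column sums zero. When
every file is requested, `p` is the quotient by the `N²`-dimensional space of matrices
that vanish outside the columns of the users requesting each row and agree across those
users, and `U` is the common kernel of the caches of one user per file.
-/

theorem exists_hammingDist_le_le {ι : Type*} [Fintype ι] {β : ι → Type*}
    [∀ i, DecidableEq (β i)] {x z : ∀ i, β i} {r s : ℕ} (h : hammingDist x z ≤ r + s) :
    ∃ y, hammingDist x y ≤ r ∧ hammingDist y z ≤ s := by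
  classical
  set D := Finset.univ.filter fun i => x i ≠ z i
  obtain ⟨T, hTD, hT⟩ := Finset.exists_subset_card_eq (min_le_right r D.card)
  refine ⟨fun i => if i ∈ T then z i else x i, ?_, ?_⟩
  · calc hammingDist x _ ≤ T.card :=
          Finset.card_le_card fun i hi => by by_contra hiT; simp [hiT] at hi
      _ ≤ r := hT ▸ min_le_left _ _
  · calc hammingDist _ z ≤ (D \ T).card := Finset.card_le_card fun i hi => by
          by_cases hiT : i ∈ T <;> simp_all [D]
      _ = D.card - T.card := Finset.card_sdiff_of_subset hTD
      _ ≤ s := by have : D.card ≤ r + s := h; omega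

section IndexCoding

variable {F V W : Type*} [Field F] [DecidableEq F] [AddCommGroup V] [Module F V]
  [AddCommGroup W] [Module F W] {ℓ : ℕ}

theorem exists_decoder_iff (E : V →ₗ[F] (Fin ℓ → F)) (side : V →ₗ[F] W) (demand : V →ₗ[F] F)
    (δ : ℕ) :
    (∃ Dec : (Fin ℓ → F) → W → F,
        ∀ X y, hammingDist y (E X) ≤ δ → Dec y (side X) = demand X) ↔
      ∀ Z, side Z = 0 → demand Z ≠ 0 → 2 * δ < hammingNorm (E Z) := by
  classical
  constructor
  · rintro ⟨Dec, hDec⟩ Z hZ hdZ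
    by_contra! hwt
    obtain ⟨y, h0, hZ'⟩ : ∃ y, hammingDist (E 0) y ≤ δ ∧ hammingDist y (E Z) ≤ δ :=
      exists_hammingDist_le_le (x := E 0) (z := E Z)
        (by rw [map_zero, hammingDist_zero_left]; omega)
    have h0 := hDec 0 y (by rwa [hammingDist_comm])
    rw [map_zero, ← hZ, hDec Z y hZ', map_zero] at h0
    exact hdZ h0
  · intro h
    refine ⟨fun y s => if hX : ∃ X, hammingDist y (E X) ≤ δ ∧ side X = s
      then demand hX.choose else 0, fun X y hy => ?_⟩
    have hX : ∃ X', hammingDist y (E X') ≤ δ ∧ side X' = side X := ⟨X, hy, rfl⟩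
    obtain ⟨hy', hside⟩ := hX.choose_spec
    simp only [dif_pos hX]
    set X' := hX.choose
    by_contra hne
    have hlt := h (X' - X) (by simp [hside]) (by simpa [sub_eq_zero] using hne)
    have hle : hammingDist (E X) (E X') ≤ δ + δ :=
      (hammingDist_triangle _ y _).trans (add_le_add (hammingDist_comm y _ ▸ hy) hy')
    rw [hammingDist_eq_hammingNorm, neg_add_eq_sub, ← map_sub] at hle
    omega

end IndexCoding

section MinimalLength

variable {F V D : Type*} [Field F] [DecidableEq F] [AddCommGroup V] [Module F V]
  [AddCommGroup D] [Module F D]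

theorem exists_code_of_delivery {ℓ d' : ℕ} (hd' : 0 < d') {B : Set V}
    {E : V →ₗ[F] (Fin ℓ → F)} (hE : ∀ Z ∈ B, d' ≤ hammingNorm (E Z)) {U : Submodule F V}
    (hUB : ∀ Z ∈ U, Z ≠ 0 → Z ∈ B) :
    ∃ C : Submodule F (Fin ℓ → F), Module.finrank F C = Module.finrank F U ∧
      ∀ x ∈ C, ∀ y ∈ C, x ≠ y → d' ≤ hammingDist x y := by
  have hwt : ∀ z : U, z ≠ 0 → d' ≤ hammingNorm (E z) := fun z hz =>
    hE z (hUB z z.2 (by simpa using hz))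
  have hinj : Function.Injective (E.domRestrict U) := by
    rw [← LinearMap.ker_eq_bot, LinearMap.ker_eq_bot']
    intro z hz
    by_contra hz0
    have := hwt z hz0
    simp_all
  refine ⟨LinearMap.range (E.domRestrict U), LinearMap.finrank_range_of_inj hinj, ?_⟩
  rintro _ ⟨z, rfl⟩ _ ⟨z', rfl⟩ hne
  rw [hammingDist_eq_hammingNorm, neg_add_eq_sub, ← map_sub]
  exact hwt _ (sub_ne_zero.mpr fun h => hne (by rw [h]))

theorem exists_delivery_of_code {n d' : ℕ} {B : Set V} [FiniteDimensional F D]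
    {p : V →ₗ[F] D} (hp : ∀ Z ∈ B, p Z ≠ 0) {C : Submodule F (Fin n → F)}
    (hC : Module.finrank F D = Module.finrank F C)
    (hdist : ∀ x ∈ C, ∀ y ∈ C, x ≠ y → d' ≤ hammingDist x y) :
    ∃ E : V →ₗ[F] (Fin n → F), ∀ Z ∈ B, d' ≤ hammingNorm (E Z) := by
  let ψ := LinearEquiv.ofFinrankEq D C hC
  refine ⟨C.subtype ∘ₗ ψ.toLinearMap ∘ₗ p, fun Z hZ => ?_⟩
  have hψ : (ψ (p Z) : Fin n → F) ≠ 0 := by simpa using hp Z hZ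
  simpa using hdist _ (ψ (p Z)).2 0 C.zero_mem hψ

theorem sInf_lengths_eq_shortestCodeLen {d' κ : ℕ} (hd' : 0 < d') {B : Set V}
    [FiniteDimensional F D] {p : V →ₗ[F] D} (hp : ∀ Z ∈ B, p Z ≠ 0) (hD : Module.finrank F D = κ)
    {U : Submodule F V} (hUB : ∀ Z ∈ U, Z ≠ 0 → Z ∈ B) (hU : Module.finrank F U = κ) :
    sInf {ℓ | ∃ E : V →ₗ[F] (Fin ℓ → F), ∀ Z ∈ B, d' ≤ hammingNorm (E Z)} =
      shortestCodeLen F κ d' := by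
  unfold shortestCodeLen
  congr 1
  ext n
  constructor
  · rintro ⟨E, hE⟩
    exact hU ▸ exists_code_of_delivery hd' hE hUB
  · rintro ⟨C, hC, hdist⟩
    exact exists_delivery_of_code hp (hD.trans hC.symm) hdist

end MinimalLength

section CFL

variable {F : Type*} [Field F] {N K : ℕ}

variable (F) in
def sideInfo (i : Fin K) : Matrix (Fin N) (Fin K × Fin N) F →ₗ[F] (Fin N → F) where
  toFun X j := ∑ a, X a (i, j)
  map_add' X Y := by ext j; simp [Finset.sum_add_distrib]
  map_smul' c X := by ext j; simp [Finset.mul_sum]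

variable (F) in
/-- The differences `X - X'` of messages that some user cannot tell apart from its cache although
they differ in the file it requests. -/
def confusable (d : Fin K → Fin N) : Set (Matrix (Fin N) (Fin K × Fin N) F) :=
  {Z | ∃ i, sideInfo F i Z = 0 ∧ Z (d i) ≠ 0}

theorem isECDeliveryCode_iff [DecidableEq F] {d : Fin K → Fin N} {δ ℓ : ℕ}
    {E : Matrix (Fin N) (Fin K × Fin N) F →ₗ[F] (Fin ℓ → F)} :
    IsECDeliveryCode F d δ ℓ E ↔ ∀ Z ∈ confusable F d, 2 * δ + 1 ≤ hammingNorm (E Z) := by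
  refine (forall₂_congr fun i m =>
    exists_decoder_iff E (sideInfo F i) (Matrix.entryLinearMap F F (d i) m) δ).trans ?_
  simp only [confusable, Set.mem_ofPred_eq, Function.ne_iff, Matrix.entryLinearMap_apply]
  constructor
  · rintro h Z ⟨i, hi, m, hm⟩
    exact h i m Z hi hm
  · exact fun h i m Z hi hm => h Z ⟨i, hi, m, hm⟩

theorem optLen_eq_sInf [DecidableEq F] (d : Fin K → Fin N) (δ : ℕ) :
    optLen F d δ = sInf {ℓ | ∃ E : Matrix (Fin N) (Fin K × Fin N) F →ₗ[F] (Fin ℓ → F),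
      ∀ Z ∈ confusable F d, 2 * δ + 1 ≤ hammingNorm (E Z)} := by
  simp only [optLen, isECDeliveryCode_iff]

end CFL

section UndemandedFile

variable {F : Type*} [Field F] {N K : ℕ}

variable (F) in
def extendBalanced (S : Finset (Fin N)) (b : Fin N) :
    Matrix S (Fin K × Fin N) F →ₗ[F] Matrix (Fin N) (Fin K × Fin N) F where
  toFun v := Matrix.of fun a m =>
    if h : a ∈ S then v ⟨a, h⟩ m else if a = b then -∑ x, v x m else 0
  map_add' v w := by
    ext a m
    simp only [Matrix.of_apply, Matrix.add_apply]
    split_ifs <;> simp [Finset.sum_add_distrib, add_comm]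
  map_smul' c v := by
    ext a m
    simp only [Matrix.of_apply, Matrix.smul_apply]
    split_ifs <;> simp [Finset.mul_sum]

theorem extendBalanced_apply_coe (S : Finset (Fin N)) (b : Fin N)
    (v : Matrix S (Fin K × Fin N) F) (x : S) :
    extendBalanced F S b v x = v x := funext fun _ => dif_pos x.2

theorem sideInfo_extendBalanced {S : Finset (Fin N)} {b : Fin N} (hb : b ∉ S) (i : Fin K)
    (v : Matrix S (Fin K × Fin N) F) : sideInfo F i (extendBalanced F S b v) = 0 := by
  ext j
  change ∑ a, extendBalanced F S b v a (i, j) = 0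
  rw [← Finset.sum_add_sum_compl S]
  have hS : ∑ a ∈ S, extendBalanced F S b v a (i, j) = ∑ x, v x (i, j) :=
    Finset.sum_dite_of_true (fun _ h => h) _ _
  have hSc : ∑ a ∈ Sᶜ, extendBalanced F S b v a (i, j) = -∑ x, v x (i, j) := by
    rw [Finset.sum_eq_single_of_mem b (Finset.mem_compl.mpr hb)]
    · exact (dif_neg hb).trans (if_pos rfl)
    · intro a ha hab
      exact (dif_neg (Finset.mem_compl.mp ha)).trans (if_neg hab)
  rw [hS, hSc, add_neg_cancel]

theorem optLen_eq_of_notMem_range [DecidableEq F] {d : Fin K → Fin N} {b : Fin N}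
    (hb : b ∉ Set.range d) (δ : ℕ) :
    optLen F d δ = shortestCodeLen F (N * K * numDistinct d) (2 * δ + 1) := by
  set S := Finset.univ.image d
  have hbS : b ∉ S := by simpa [S] using hb
  have hdim : Module.finrank F (Matrix S (Fin K × Fin N) F) = N * K * numDistinct d := by
    rw [Module.finrank_matrix, Fintype.card_coe, Fintype.card_prod, Fintype.card_fin,
      Fintype.card_fin, Module.finrank_self, numDistinct]
    ring
  let restrict : Matrix (Fin N) (Fin K × Fin N) F →ₗ[F] Matrix S (Fin K × Fin N) F :=
    LinearMap.funLeft F _ (↑)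
  have hinj : Function.Injective (extendBalanced F S b) :=
    Function.LeftInverse.injective (g := restrict) fun v =>
      funext fun x => extendBalanced_apply_coe S b v x
  rw [optLen_eq_sInf]
  refine sInf_lengths_eq_shortestCodeLen (Nat.succ_pos _) (p := restrict) ?_ hdim
    (U := LinearMap.range (extendBalanced F S b)) ?_
    ((LinearMap.finrank_range_of_inj hinj).trans hdim)
  · rintro Z ⟨i, -, hZ⟩ h0
    exact hZ (congrFun h0 ⟨d i, Finset.mem_image_of_mem d (Finset.mem_univ i)⟩)
  · rintro _ ⟨v, rfl⟩ hv
    obtain ⟨x, hx⟩ := Function.ne_iff.mp fun h : v = 0 => hv (by rw [h, map_zero])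
    obtain ⟨i, -, hi⟩ := Finset.mem_image.mp x.2
    exact ⟨i, sideInfo_extendBalanced hbS i v, by rwa [hi, extendBalanced_apply_coe]⟩

end UndemandedFile

section AllFilesDemanded

variable {F : Type*} [Field F] {N K : ℕ}

variable (F) in
def demandBlocks (d : Fin K → Fin N) :
    Matrix (Fin N) (Fin N) F →ₗ[F] Matrix (Fin N) (Fin K × Fin N) F where
  toFun Y := Matrix.of fun a m => if d m.1 = a then Y a m.2 else 0
  map_add' Y Y' := by
    ext a m
    simp only [Matrix.of_apply, Matrix.add_apply]
    split_ifs <;> simp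
  map_smul' c Y := by
    ext a m
    simp only [Matrix.of_apply, Matrix.smul_apply]
    split_ifs <;> simp

theorem sideInfo_demandBlocks (d : Fin K → Fin N) (i : Fin K) (Y : Matrix (Fin N) (Fin N) F) :
    sideInfo F i (demandBlocks F d Y) = Y (d i) := by
  ext j
  exact Fintype.sum_ite_eq (d i) fun a => Y a j

theorem demandBlocks_injective {d : Fin K → Fin N} (hd : Function.Surjective d) :
    Function.Injective (demandBlocks F d) := by
  intro Y Y' h
  ext a j
  obtain ⟨i, rfl⟩ := hd a
  simpa [sideInfo_demandBlocks] using congrFun (congrArg (sideInfo F i) h) j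

theorem demandBlocks_notMem_confusable (d : Fin K → Fin N)
    (Y : Matrix (Fin N) (Fin N) F) : demandBlocks F d Y ∉ confusable F d := by
  rintro ⟨i, hside, hZ⟩
  rw [sideInfo_demandBlocks] at hside
  refine hZ (funext fun m => ?_)
  change (if d m.1 = d i then Y (d i) m.2 else 0) = 0
  simp [hside]

theorem optLen_eq_of_surjective [DecidableEq F] {d : Fin K → Fin N}
    (hd : Function.Surjective d) (δ : ℕ) :
    optLen F d δ = shortestCodeLen F (N ^ 2 * (K - 1)) (2 * δ + 1) := by
  obtain ⟨u, hu⟩ := hd.hasRightInverse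
  let W := LinearMap.range (demandBlocks F d)
  let reps := LinearMap.pi fun a => sideInfo F (N := N) (u a)
  have hM : Module.finrank F (Matrix (Fin N) (Fin K × Fin N) F) = N * (K * N) := by
    simp [Module.finrank_matrix]
  have hW : Module.finrank F W = N * N := by
    simp [W, LinearMap.finrank_range_of_inj (demandBlocks_injective hd), Module.finrank_matrix]
  have hreps : Function.Surjective reps := by
    intro w
    refine ⟨Matrix.of fun b m => if u b = m.1 then w b m.2 else 0, ?_⟩
    ext a j
    simp [reps, sideInfo, hu.injective.eq_iff]
  have hκ : N * (K * N) - N * N = N ^ 2 * (K - 1) := by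
    rw [Nat.mul_sub_one]; ring_nf
  rw [optLen_eq_sInf]
  refine sInf_lengths_eq_shortestCodeLen (Nat.succ_pos _) (p := W.mkQ) ?_ ?_
    (U := LinearMap.ker reps) ?_ ?_
  · rintro Z hZ h0
    obtain ⟨Y, rfl⟩ := (Submodule.Quotient.mk_eq_zero W).mp h0
    exact demandBlocks_notMem_confusable d Y hZ
  · rw [Submodule.finrank_quotient, hM, hW, hκ]
  · intro Z hZ hZ0
    obtain ⟨a, ha⟩ := Function.ne_iff.mp hZ0
    exact ⟨u a, congrFun hZ a, by rwa [hu a]⟩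
  · have := reps.finrank_range_add_finrank_ker
    rw [LinearMap.range_eq_top.mpr hreps, finrank_top, Module.finrank_pi_fintype, hM] at this
    simp only [Module.finrank_fin_fun, Finset.sum_const, Finset.card_univ, Fintype.card_fin,
      smul_eq_mul] at this
    omega

end AllFilesDemanded

theorem numDistinct_eq_iff_surjective {K N : ℕ} (d : Fin K → Fin N) :
    numDistinct d = N ↔ Function.Surjective d := by
  have h := Finset.card_eq_iff_eq_univ (Finset.univ.image d)
  rw [Fintype.card_fin] at h
  rw [numDistinct, h]
  simp [Finset.eq_univ_iff_forall, Function.Surjective]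

theorem optLen_eq_CFL_KgtN_general (F : Type*) [Field F] [DecidableEq F]
    (N K : ℕ) (hN : 1 ≤ N) (d : Fin K → Fin N) (δ : ℕ) :
    (numDistinct d ≤ N - 1 →
      optLen F d δ = shortestCodeLen F (N * K * numDistinct d) (2 * δ + 1)) ∧
    (numDistinct d = N →
      optLen F d δ = shortestCodeLen F (N ^ 2 * (K - 1)) (2 * δ + 1)) := by
  constructor
  · intro hlt
    obtain ⟨b, hb⟩ : ∃ b, b ∉ Set.range d := by
      by_contra! h
      have := (numDistinct_eq_iff_surjective d).mpr h
      omega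
    exact optLen_eq_of_notMem_range hb δ
  · intro heq
    exact optLen_eq_of_surjective ((numDistinct_eq_iff_surjective d).mp heq) δ

theorem optLen_eq_CFL_KgtN (F : Type*) [Field F] [Fintype F] [DecidableEq F]
    (N K : ℕ) (hN : 1 ≤ N) (hK : N < K) (d : Fin K → Fin N) (δ : ℕ) :
    (numDistinct d ≤ N - 1 →
      optLen F d δ = shortestCodeLen F (N * K * numDistinct d) (2 * δ + 1)) ∧
    (numDistinct d = N →
      optLen F d δ = shortestCodeLen F (N ^ 2 * (K - 1)) (2 * δ + 1)) :=
  optLen_eq_CFL_KgtN_general F N K hN d δ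
end
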